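/- arXiv:2106.15024 — 2 statements merged into one kernel-verified Lean document; each statement's English description precedes it below -/
import Mathlib

section
/- Let k ≥ 1 and l ≥ 0 be integers and let τ be a real number with τ³ = kτ² + lτ + 1 and k < τ < k + 1. Define the Jacobi–Perron map T(ω₁, ω₂) = (1/ω₂ − ⌊1/ω₂⌋, ω₁/ω₂ − ⌊ω₁/ω₂⌋) for ω₂ ≠ 0. Then the point ω* = (τ − k, 1/τ) lies in (0,1)², satisfies T(ω*) = ω*, and its Jacobi–Perron digits are ⌊1/ω*₂⌋ = k and ⌊ω*₁/ω*₂⌋ = l. -/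
/-- The Jacobi–Perron map `T(ω₁,ω₂) = (1/ω₂ − ⌊1/ω₂⌋, ω₁/ω₂ − ⌊ω₁/ω₂⌋)`. -/
noncomputable def jacobiPerron (ω : ℝ × ℝ) : ℝ × ℝ :=
  (1 / ω.2 - ⌊1 / ω.2⌋, ω.1 / ω.2 - ⌊ω.1 / ω.2⌋)

/-- If `τ³ = kτ² + lτ + 1` with integers `k ≥ 1`, `l ≥ 0` and `k < τ < k + 1`, then
`ω* = (τ − k, 1/τ)` lies in `(0,1)²`, is a fixed point of the Jacobi–Perron map, and its
Jacobi–Perron digits are `⌊1/ω*₂⌋ = k` and `⌊ω*₁/ω*₂⌋ = l`. -/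
theorem jacobi_perron_period_one (k l : ℤ) (hk : 1 ≤ k) (hl : 0 ≤ l) (τ : ℝ)
    (hτ : τ ^ 3 = (k : ℝ) * τ ^ 2 + (l : ℝ) * τ + 1)
    (hlow : (k : ℝ) < τ) (hhigh : τ < (k : ℝ) + 1) :
    (0 < τ - k ∧ τ - (k : ℝ) < 1) ∧ (0 < 1 / τ ∧ 1 / τ < 1) ∧
    jacobiPerron (τ - (k : ℝ), 1 / τ) = (τ - (k : ℝ), 1 / τ) ∧
    ⌊1 / (1 / τ)⌋ = k ∧ ⌊(τ - (k : ℝ)) / (1 / τ)⌋ = l := by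
  have hk1 : (1 : ℝ) ≤ (k : ℝ) := by exact_mod_cast hk
  have hτpos : (0 : ℝ) < τ := by linarith
  have hτne : τ ≠ 0 := ne_of_gt hτpos
  have hinv : 1 / (1 / τ) = τ := one_div_one_div τ
  have h1τpos : 0 < 1 / τ := by positivity
  have h1τlt1 : 1 / τ < 1 := by rw [div_lt_one hτpos]; linarith
  have hfloor1 : ⌊τ⌋ = k := by
    rw [Int.floor_eq_iff]
    constructor
    · exact hlow.le
    · push_cast; linarith
  have hq : (τ - (k : ℝ)) / (1 / τ) = τ ^ 2 - (k : ℝ) * τ := by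
    field_simp
  have hone : τ ^ 2 - (k : ℝ) * τ = (l : ℝ) + 1 / τ := by
    field_simp
    nlinarith [hτ]
  have hfloor2 : ⌊(τ - (k : ℝ)) / (1 / τ)⌋ = l := by
    rw [hq, hone, Int.floor_eq_iff]
    constructor
    · linarith
    · push_cast; linarith
  refine ⟨⟨by linarith, by linarith⟩, ⟨h1τpos, h1τlt1⟩, ?_, ?_, hfloor2⟩
  · unfold jacobiPerron
    simp only [hinv, hfloor1]
    refine Prod.ext (by simp) ?_
    simp only
    have hfloor2' : ⌊τ ^ 2 - (k : ℝ) * τ⌋ = l := by rw [← hq]; exact hfloor2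
    rw [hq, hfloor2', hone]
    push_cast
    ring
  · rw [hinv, hfloor1]
end

section
/- Let σ be the unique real root of σ³ = σ + 1 and let T(ω₁, ω₂) = (1/ω₂ − ⌊1/ω₂⌋, ω₁/ω₂ − ⌊ω₁/ω₂⌋) be the Jacobi–Perron map. Then the point ω* = (σ − 1, 1/σ) satisfies T(ω*) = (σ − 1, σ² − σ) ≠ ω* and T(T(ω*)) = ω*, with digit pairs (⌊1/ω₂⌋, ⌊ω₁/ω₂⌋) equal to (1, 0) at ω* and (2, 0) at T(ω*); that is, ω* is a period-two point of the Jacobi–Perron map with repeating digit sequence [(1,0),(2,0)]. -/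
/-- For the spiral mean `σ` (the real root of `σ³ = σ + 1`), the vector
`ω* = (σ − 1, 1/σ)` is a period-two point of the Jacobi–Perron map: `T(ω*) = (σ−1, σ²−σ)
≠ ω*`, `T(T(ω*)) = ω*`, and the digit pairs `(⌊1/ω₂⌋, ⌊ω₁/ω₂⌋)` are `(1,0)` at `ω*` and
`(2,0)` at `T(ω*)`; i.e. the repeating digit sequence is `[(1,0),(2,0)]`. -/
theorem jacobi_perron_spiral_mean_period_two (σ : ℝ) (hσ : σ ^ 3 = σ + 1) :
    jacobiPerron (σ - 1, 1 / σ) = (σ - 1, σ ^ 2 - σ) ∧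
    (σ - 1, σ ^ 2 - σ) ≠ (σ - 1, 1 / σ) ∧
    jacobiPerron (jacobiPerron (σ - 1, 1 / σ)) = (σ - 1, 1 / σ) ∧
    (⌊1 / (1 / σ)⌋ = 1 ∧ ⌊(σ - 1) / (1 / σ)⌋ = 0) ∧
    (⌊1 / (σ ^ 2 - σ)⌋ = 2 ∧ ⌊(σ - 1) / (σ ^ 2 - σ)⌋ = 0) := by
  have h0 : (0:ℝ) < σ := by nlinarith [sq_nonneg σ, sq_nonneg (σ + 1), sq_nonneg (σ - 1)]
  have hl : (1.32:ℝ) < σ := by nlinarith [sq_nonneg (σ - 1.32), sq_nonneg (σ + 1)]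
  have hu : σ < 1.33 := by nlinarith [sq_nonneg (σ - 1.33), sq_nonneg (σ + 1)]
  have hne : σ ≠ 0 := ne_of_gt h0
  have hdpos : (0:ℝ) < σ ^ 2 - σ := by nlinarith
  have hd : σ ^ 2 - σ ≠ 0 := ne_of_gt hdpos
  have eA : 1 / (1 / σ) = σ := one_div_one_div σ
  have eB : (σ - 1) / (1 / σ) = σ ^ 2 - σ := by field_simp
  have eC : 1 / (σ ^ 2 - σ) = σ + 1 := by
    rw [div_eq_iff hd]; linear_combination -hσ
  have eD : (σ - 1) / (σ ^ 2 - σ) = 1 / σ := by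
    rw [div_eq_div_iff hd hne]; ring
  have f1 : ⌊σ⌋ = 1 := by
    rw [Int.floor_eq_iff]
    constructor <;> [push_cast; push_cast] <;> linarith
  have f2 : ⌊σ ^ 2 - σ⌋ = 0 := by
    rw [Int.floor_eq_iff]
    constructor <;> push_cast <;> nlinarith
  have f3 : ⌊σ + 1⌋ = 2 := by
    rw [Int.floor_eq_iff]
    constructor <;> push_cast <;> linarith
  have hinv : (0:ℝ) < 1 / σ := by positivity
  have hinv1 : 1 / σ < 1 := by
    rw [div_lt_one h0]; linarith
  have f4 : ⌊(1:ℝ) / σ⌋ = 0 := by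
    rw [Int.floor_eq_iff]
    constructor <;> push_cast <;> linarith
  have step1 : jacobiPerron (σ - 1, 1 / σ) = (σ - 1, σ ^ 2 - σ) := by
    simp only [jacobiPerron, eA, eB, f1, f2]
    norm_num
  have step2 : jacobiPerron (σ - 1, σ ^ 2 - σ) = (σ - 1, 1 / σ) := by
    simp only [jacobiPerron, eC, eD, f3, f4]
    norm_num
    ring
  refine ⟨step1, ?_, by rw [step1, step2], ⟨by rw [eA, f1], by rw [eB, f2]⟩,
    ⟨by rw [eC, f3], by rw [eD, f4]⟩⟩
  intro h
  have h2 : σ ^ 2 - σ = 1 / σ := congrArg Prod.snd h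
  rw [eq_div_iff hne] at h2
  nlinarith
end
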